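/- arXiv:2207.11371 — 4 statements merged into one kernel-verified Lean document; each statement's English description precedes it below -/
import Mathlib

section
/- Let G = (ℝ^d, ·) be a group with polynomial multiplication and inversion and identity 0, and let (φ_t)_{t>0} be straight dilations forming an approximate group dilation structure for G, with limit law ∙ and with x∙⁻¹ := lim_{t→∞} φ_{1/t}((φ_t(x))⁻¹). Then (ℝ^d, ∙) is a group with identity element 0 whose inversion map is x ↦ x∙⁻¹ (that is, x∙⁻¹ ∙ x = x ∙ x∙⁻¹ = 0 for all x, and ∙ is associative with x∙0 = 0∙x = x); moreover for every t > 0 and all x,y ∈ ℝ^d one has φ_t(x∙y) = φ_t(x) ∙ φ_t(y), and lim_{t→∞} φ_{1/t}(φ_t(x)⁻¹ · φ_t(y)) = x∙⁻¹ ∙ y. -/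
/-
Write the `i`-th coordinate of `G.mul` as a polynomial `p` in the `2d` coordinates of `(x, y)`.
The rescaled product `φ_{1/t}(φ_t x · φ_t y)_i` is then `∑ₘ cₘ (x, y)^m t^(|m| - aᵢ)`, where
`|m|` is the dilation weight of the monomial `m`. If some monomial of `p` had weight `> aᵢ`, the
top-weight part of `p` would vanish at every point, hence be zero: so existence of the limit law
forces every weight to be `≤ aᵢ`, and the limit is the weight-`aᵢ` component of `p`. This
description is continuous in `(x, y)`, so the rescaled product of any `U t`, `V t` with
`φ_{1/t}(U t) → x`, `φ_{1/t}(V t) → y` tends to `x ∙ y`; every identity of `(ℝ^d, ∙)` is then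
the limit of the corresponding identity of `G`.
-/

open Filter Topology MeasureTheory

noncomputable section

/-- Straight dilation with exponents `a`: `(dil a t u) i = t ^ (a i) * u i`. -/
def dil {d : ℕ} (a : Fin d → ℝ) (t : ℝ) (u : Fin d → ℝ) : Fin d → ℝ :=
  fun i => t ^ a i * u i

/-- A group structure on `ℝ^d` with identity `0` whose multiplication and inversion are
given coordinatewise by real polynomial functions of the coordinates. -/
structure PolyGroup (d : ℕ) where
  mul : (Fin d → ℝ) → (Fin d → ℝ) → (Fin d → ℝ)
  inv : (Fin d → ℝ) → (Fin d → ℝ)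
  mul_assoc' : ∀ x y z, mul (mul x y) z = mul x (mul y z)
  mul_zero' : ∀ x, mul x 0 = x
  zero_mul' : ∀ x, mul 0 x = x
  mul_inv' : ∀ x, mul x (inv x) = 0
  inv_mul' : ∀ x, mul (inv x) x = 0
  poly_mul : ∀ i, ∃ p : MvPolynomial (Fin d ⊕ Fin d) ℝ,
    ∀ x y, mul x y i = MvPolynomial.eval (Sum.elim x y) p
  poly_inv : ∀ i, ∃ p : MvPolynomial (Fin d) ℝ,
    ∀ x, inv x i = MvPolynomial.eval x p

/-- Euclidean norm on `ℝ^d`. -/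
def eucNorm {d : ℕ} (x : Fin d → ℝ) : ℝ := Real.sqrt (∑ i, x i ^ 2)

/-- A straight approximate group dilation structure for `G`, with the limit law `bullet`
and limit inverse `bulletInv`. -/
structure ApproxDil (d : ℕ) (G : PolyGroup d) where
  a : Fin d → ℝ
  a_pos : ∀ i, 0 < a i
  bulletInv : (Fin d → ℝ) → (Fin d → ℝ)
  bullet : (Fin d → ℝ) → (Fin d → ℝ) → (Fin d → ℝ)
  tendsto_inv : ∀ x,
    Tendsto (fun t : ℝ => dil a t⁻¹ (G.inv (dil a t x))) atTop (𝓝 (bulletInv x))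
  tendsto_mul : ∀ x y,
    Tendsto (fun t : ℝ => dil a t⁻¹ (G.mul (dil a t x) (dil a t y))) atTop (𝓝 (bullet x y))

open MvPolynomial

theorem tendsto_sum_mul_rpow {ι : Type*} (s : Finset ι) {c : ι → ℝ → ℝ} {L e : ι → ℝ}
    (hc : ∀ k ∈ s, Tendsto (c k) atTop (𝓝 (L k))) (he : ∀ k ∈ s, e k ≤ 0) :
    Tendsto (fun t => ∑ k ∈ s, c k t * t ^ e k) atTop (𝓝 (∑ k ∈ s with e k = 0, L k)) := by
  rw [Finset.sum_filter]
  refine tendsto_finsetSum s fun k hk => ?_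
  split_ifs with hek
  · simpa [hek] using hc k hk
  · have hpow : Tendsto (fun t : ℝ => t ^ e k) atTop (𝓝 0) := by
      simpa using tendsto_rpow_neg_atTop (neg_pos.mpr ((he k hk).lt_of_ne hek))
    simpa using (hc k hk).mul hpow

section WeightedRescaling

variable {σ : Type*} (w : σ → ℝ)

theorem eval_rescale_monomial {t : ℝ} (ht : 0 < t) (z : σ → ℝ) (m : σ →₀ ℕ) (c : ℝ) :
    eval (fun j => t ^ w j * z j) (monomial m c) =
      eval z (monomial m c) * t ^ Finsupp.weight w m := by
  have hpow : ∀ j, (t ^ w j) ^ m j = t ^ (m j • w j) := fun j => by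
    rw [nsmul_eq_mul, mul_comm, Real.rpow_mul_natCast ht.le]
  simp only [eval_monomial, mul_pow, Finsupp.weight_apply, Finsupp.sum, Real.rpow_sum_of_pos ht,
    Finsupp.prod, hpow, Finset.prod_mul_distrib]
  ring

theorem eval_rescale {t : ℝ} (ht : 0 < t) (z : σ → ℝ) (p : MvPolynomial σ ℝ) :
    eval (fun j => t ^ w j * z j) p =
      ∑ m ∈ p.support, eval z (monomial m (coeff m p)) * t ^ Finsupp.weight w m := by
  conv_lhs => rw [p.as_sum]
  simp only [map_sum, eval_rescale_monomial w ht]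

theorem tendsto_rescale_eval {p : MvPolynomial σ ℝ} {r : ℝ}
    (hp : ∀ m ∈ p.support, Finsupp.weight w m ≤ r) {z : ℝ → σ → ℝ} {z₀ : σ → ℝ}
    (hz : Tendsto z atTop (𝓝 z₀)) :
    Tendsto (fun t => (t ^ r)⁻¹ * eval (fun j => t ^ w j * z t j) p) atTop
      (𝓝 (eval z₀ (weightedHomogeneousComponent w r p))) := by
  classical
  have hlim := tendsto_sum_mul_rpow p.support (e := fun m => Finsupp.weight w m - r)
    (c := fun m t => eval (z t) (monomial m (coeff m p)))
    (fun m _ => ((continuous_eval _).tendsto z₀).comp hz) (fun m hm => sub_nonpos.mpr (hp m hm))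
  simp only [sub_eq_zero] at hlim
  rw [weightedHomogeneousComponent_apply, map_sum]
  refine hlim.congr' ?_
  filter_upwards [eventually_gt_atTop 0] with t ht
  rw [eval_rescale w ht, Finset.mul_sum]
  refine Finset.sum_congr rfl fun m _ => ?_
  rw [Real.rpow_sub ht]
  ring

theorem weight_le_of_tendsto_rescale_eval {p : MvPolynomial σ ℝ} {r : ℝ}
    (h : ∀ z : σ → ℝ, ∃ L,
      Tendsto (fun t => (t ^ r)⁻¹ * eval (fun j => t ^ w j * z j) p) atTop (𝓝 L)) :
    ∀ m ∈ p.support, Finsupp.weight w m ≤ r := by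
  classical
  by_contra! hcon
  obtain ⟨m₀, hm₀, hm₀r⟩ := hcon
  obtain ⟨M, hM, hmax⟩ := p.support.exists_max_image (Finsupp.weight w) ⟨m₀, hm₀⟩
  set R := Finsupp.weight w M
  have hrR : r < R := hm₀r.trans_le (hmax m₀ hm₀)
  have hzero : weightedHomogeneousComponent w R p = 0 := by
    refine MvPolynomial.funext fun z => ?_
    obtain ⟨L, hL⟩ := h z
    have hdecay : Tendsto (fun t => t ^ (r - R) * ((t ^ r)⁻¹ * eval (fun j => t ^ w j * z j) p))
        atTop (𝓝 0) := by
      simpa using (tendsto_rpow_neg_atTop (sub_pos.mpr hrR)).mul hL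
    have hlead := tendsto_rescale_eval w hmax (tendsto_const_nhds (x := z))
    rw [map_zero, tendsto_nhds_unique hlead (hdecay.congr' ?_)]
    filter_upwards [eventually_gt_atTop 0] with t ht
    rw [Real.rpow_sub ht]
    field_simp
  have := congrArg (coeff M) hzero
  rw [coeff_weightedHomogeneousComponent, if_pos rfl, coeff_zero] at this
  exact mem_support_iff.mp hM this

end WeightedRescaling

theorem dil_zero {d : ℕ} (a : Fin d → ℝ) (t : ℝ) : dil a t 0 = 0 := by
  funext i; simp [dil]

theorem dil_dil {d : ℕ} (a : Fin d → ℝ) {s t : ℝ} (hs : 0 < s) (ht : 0 < t) (x : Fin d → ℝ) :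
    dil a s (dil a t x) = dil a (s * t) x := by
  funext i
  simp only [dil, Real.mul_rpow hs.le ht.le]
  ring

theorem dil_dil_inv {d : ℕ} (a : Fin d → ℝ) {t : ℝ} (ht : 0 < t) (x : Fin d → ℝ) :
    dil a t (dil a t⁻¹ x) = x := by
  rw [dil_dil a ht (inv_pos.mpr ht), mul_inv_cancel₀ ht.ne']
  funext i
  simp [dil]

theorem dil_inv_dil {d : ℕ} (a : Fin d → ℝ) {t : ℝ} (ht : 0 < t) (x : Fin d → ℝ) :
    dil a t⁻¹ (dil a t x) = x := by
  simpa using dil_dil_inv a (inv_pos.mpr ht) x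

theorem tendsto_dil_inv_dil {d : ℕ} (a : Fin d → ℝ) (x : Fin d → ℝ) :
    Tendsto (fun t => dil a t⁻¹ (dil a t x)) atTop (𝓝 x) :=
  tendsto_const_nhds.congr' <| (eventually_gt_atTop 0).mono fun _ ht => (dil_inv_dil a ht x).symm

theorem continuous_dil {d : ℕ} (a : Fin d → ℝ) (t : ℝ) : Continuous (dil a t) :=
  continuous_pi fun i => continuous_const.mul (continuous_apply i)

theorem dil_inv_mul_dil_apply {d : ℕ} (a : Fin d → ℝ) (mul : (Fin d → ℝ) → (Fin d → ℝ) → Fin d → ℝ)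
    {i : Fin d} {p : MvPolynomial (Fin d ⊕ Fin d) ℝ} (hp : ∀ x y, mul x y i = eval (Sum.elim x y) p)
    {t : ℝ} (ht : 0 < t) (x y : Fin d → ℝ) :
    dil a t⁻¹ (mul (dil a t x) (dil a t y)) i =
      (t ^ a i)⁻¹ * eval (fun j => t ^ Sum.elim a a j * Sum.elim x y j) p := by
  have helim : Sum.elim (dil a t x) (dil a t y) = fun j => t ^ Sum.elim a a j * Sum.elim x y j := by
    funext j; cases j <;> rfl
  simp only [dil, hp, helim, Real.inv_rpow ht.le]

namespace ApproxDil

variable {d : ℕ} {G : PolyGroup d} (D : ApproxDil d G)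

theorem weight_le_of_mul_apply_eq_eval {i : Fin d} {p : MvPolynomial (Fin d ⊕ Fin d) ℝ}
    (hp : ∀ x y, G.mul x y i = eval (Sum.elim x y) p) :
    ∀ m ∈ p.support, Finsupp.weight (Sum.elim D.a D.a) m ≤ D.a i := by
  refine weight_le_of_tendsto_rescale_eval _ fun z => ⟨D.bullet (z ∘ Sum.inl) (z ∘ Sum.inr) i, ?_⟩
  refine (tendsto_pi_nhds.mp (D.tendsto_mul _ _) i).congr' ?_
  filter_upwards [eventually_gt_atTop 0] with t ht
  rw [dil_inv_mul_dil_apply D.a G.mul hp ht, Sum.elim_comp_inl_inr]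

theorem tendsto_dil_inv_mul_dil_apply {i : Fin d} {p : MvPolynomial (Fin d ⊕ Fin d) ℝ}
    (hp : ∀ x y, G.mul x y i = eval (Sum.elim x y) p) {u v : ℝ → Fin d → ℝ} {x y : Fin d → ℝ}
    (hu : Tendsto u atTop (𝓝 x)) (hv : Tendsto v atTop (𝓝 y)) :
    Tendsto (fun t => dil D.a t⁻¹ (G.mul (dil D.a t (u t)) (dil D.a t (v t))) i) atTop
      (𝓝 (eval (Sum.elim x y) (weightedHomogeneousComponent (Sum.elim D.a D.a) (D.a i) p))) := by
  have huv : Tendsto (fun t => Sum.elim (u t) (v t)) atTop (𝓝 (Sum.elim x y)) :=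
    tendsto_pi_nhds.mpr (Sum.rec (tendsto_pi_nhds.mp hu) (tendsto_pi_nhds.mp hv))
  refine (tendsto_rescale_eval _ (D.weight_le_of_mul_apply_eq_eval hp) huv).congr' ?_
  filter_upwards [eventually_gt_atTop 0] with t ht
  rw [dil_inv_mul_dil_apply D.a G.mul hp ht]

theorem tendsto_dil_inv_mul {U V : ℝ → Fin d → ℝ} {x y : Fin d → ℝ}
    (hU : Tendsto (fun t => dil D.a t⁻¹ (U t)) atTop (𝓝 x))
    (hV : Tendsto (fun t => dil D.a t⁻¹ (V t)) atTop (𝓝 y)) :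
    Tendsto (fun t => dil D.a t⁻¹ (G.mul (U t) (V t))) atTop (𝓝 (D.bullet x y)) := by
  refine tendsto_pi_nhds.mpr fun i => ?_
  obtain ⟨p, hp⟩ := G.poly_mul i
  have hbullet := tendsto_nhds_unique (tendsto_pi_nhds.mp (D.tendsto_mul x y) i)
    (D.tendsto_dil_inv_mul_dil_apply hp tendsto_const_nhds tendsto_const_nhds)
  rw [hbullet]
  refine (D.tendsto_dil_inv_mul_dil_apply hp hU hV).congr' ?_
  filter_upwards [eventually_gt_atTop 0] with t ht
  rw [dil_dil_inv D.a ht, dil_dil_inv D.a ht]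

theorem bullet_eq_of_eventually_eq {U V : ℝ → Fin d → ℝ} {x y z : Fin d → ℝ}
    (hU : Tendsto (fun t => dil D.a t⁻¹ (U t)) atTop (𝓝 x))
    (hV : Tendsto (fun t => dil D.a t⁻¹ (V t)) atTop (𝓝 y))
    (hz : ∀ᶠ t in atTop, dil D.a t⁻¹ (G.mul (U t) (V t)) = z) :
    D.bullet x y = z :=
  tendsto_nhds_unique (D.tendsto_dil_inv_mul hU hV)
    (tendsto_const_nhds.congr' (hz.mono fun _ => Eq.symm))

theorem bullet_assoc (x y z : Fin d → ℝ) :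
    D.bullet (D.bullet x y) z = D.bullet x (D.bullet y z) := by
  have hleft := D.tendsto_dil_inv_mul (D.tendsto_mul x y) (tendsto_dil_inv_dil D.a z)
  have hright := D.tendsto_dil_inv_mul (tendsto_dil_inv_dil D.a x) (D.tendsto_mul y z)
  simp only [G.mul_assoc'] at hleft
  exact tendsto_nhds_unique hleft hright

theorem bullet_zero (x : Fin d → ℝ) : D.bullet x 0 = x := by
  refine D.bullet_eq_of_eventually_eq (tendsto_dil_inv_dil D.a x) (tendsto_dil_inv_dil D.a 0) ?_
  filter_upwards [eventually_gt_atTop 0] with t ht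
  rw [dil_zero, G.mul_zero', dil_inv_dil D.a ht]

theorem zero_bullet (x : Fin d → ℝ) : D.bullet 0 x = x := by
  refine D.bullet_eq_of_eventually_eq (tendsto_dil_inv_dil D.a 0) (tendsto_dil_inv_dil D.a x) ?_
  filter_upwards [eventually_gt_atTop 0] with t ht
  rw [dil_zero, G.zero_mul', dil_inv_dil D.a ht]

theorem bulletInv_bullet (x : Fin d → ℝ) : D.bullet (D.bulletInv x) x = 0 :=
  D.bullet_eq_of_eventually_eq (D.tendsto_inv x) (tendsto_dil_inv_dil D.a x) <|
    Eventually.of_forall fun t => by rw [G.inv_mul', dil_zero]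

theorem bullet_bulletInv (x : Fin d → ℝ) : D.bullet x (D.bulletInv x) = 0 :=
  D.bullet_eq_of_eventually_eq (tendsto_dil_inv_dil D.a x) (D.tendsto_inv x) <|
    Eventually.of_forall fun t => by rw [G.mul_inv', dil_zero]

theorem dil_bullet {s : ℝ} (hs : 0 < s) (x y : Fin d → ℝ) :
    dil D.a s (D.bullet x y) = D.bullet (dil D.a s x) (dil D.a s y) := by
  -- substitute `t * s` for `t` in the limit defining `x ∙ y`
  have hrescaled := ((continuous_dil D.a s).tendsto _).comp
    ((D.tendsto_mul x y).comp (tendsto_id.atTop_mul_const hs))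
  refine tendsto_nhds_unique (hrescaled.congr' ?_) (D.tendsto_mul _ _)
  filter_upwards [eventually_gt_atTop 0] with t ht
  have hts : 0 < t * s := mul_pos ht hs
  simp only [Function.comp_apply, id]
  rw [dil_dil D.a hs (inv_pos.mpr hts), dil_dil D.a ht hs, dil_dil D.a ht hs,
    show s * (t * s)⁻¹ = t⁻¹ by field_simp]

theorem tendsto_dil_inv_inv_mul (x y : Fin d → ℝ) :
    Tendsto (fun t => dil D.a t⁻¹ (G.mul (G.inv (dil D.a t x)) (dil D.a t y))) atTop
      (𝓝 (D.bullet (D.bulletInv x) y)) :=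
  D.tendsto_dil_inv_mul (D.tendsto_inv x) (tendsto_dil_inv_dil D.a y)

end ApproxDil

theorem stmt_1 (d : ℕ) (G : PolyGroup d) (D : ApproxDil d G) :
    (∀ x y z, D.bullet (D.bullet x y) z = D.bullet x (D.bullet y z)) ∧
    (∀ x, D.bullet x 0 = x) ∧ (∀ x, D.bullet 0 x = x) ∧
    (∀ x, D.bullet (D.bulletInv x) x = 0) ∧ (∀ x, D.bullet x (D.bulletInv x) = 0) ∧
    (∀ t : ℝ, 0 < t → ∀ x y,
      dil D.a t (D.bullet x y) = D.bullet (dil D.a t x) (dil D.a t y)) ∧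
    (∀ x y, Tendsto (fun t : ℝ => dil D.a t⁻¹ (G.mul (G.inv (dil D.a t x)) (dil D.a t y)))
      atTop (𝓝 (D.bullet (D.bulletInv x) y))) :=
  ⟨D.bullet_assoc, D.bullet_zero, D.zero_bullet, D.bulletInv_bullet, D.bullet_bulletInv,
    fun _ ht => D.dil_bullet ht, D.tendsto_dil_inv_inv_mul⟩
end
end

section
/- Let G = (ℝ^d, ·) be a group with polynomial multiplication and inversion and identity 0, and let (φ_t)_{t>0} be a straight approximate group dilation structure for G with limit law ∙ (so that (ℝ^d, ∙) is a group with identity 0). Let H be a subgroup of G and define H∙ := { x ∈ ℝ^d : there exists a sequence (x_k)_{k≥1} in H with φ_{1/k}(x_k) → x as k → ∞ }. Then H∙ is a subgroup of (ℝ^d, ∙). -/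
open Filter Topology MeasureTheory

noncomputable section

/-- The set of limit points `x = lim_k φ_{1/k}(x_k)` with `x_k ∈ H`. -/
def limitSubgroup {d : ℕ} (a : Fin d → ℝ) (H : Set (Fin d → ℝ)) : Set (Fin d → ℝ) :=
  {x | ∃ u : ℕ → (Fin d → ℝ), (∀ k, u k ∈ H) ∧
    Tendsto (fun k : ℕ => dil a ((k : ℝ))⁻¹ (u k)) atTop (𝓝 x)}

/-!
Split a polynomial `p` into its components `p_v` that are weighted homogeneous of degree `v`
for the dilation weights, so that `t⁻¹ ^ b * p (δ_t z) = ∑_v p_v(z) t ^ (v - b)`. If this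
converges as `t → ∞` for every `z`, then distinct powers of `t` cannot cancel, so every
component with `v > b` vanishes identically. What remains is a sum of terms
`p_v(z) t ^ (v - b)` with `v ≤ b`, which converge jointly in `(t, z)`; hence the rescaled
maps converge locally uniformly, and limits of rescaled products and inverses of elements of
`H` are again such limits.
-/

lemma tendsto_rpow_atTop_of_nonpos {e : ℝ} (he : e ≤ 0) :
    Tendsto (fun t : ℝ => t ^ e) atTop (𝓝 (if e = 0 then 1 else 0)) := by
  rcases he.eq_or_lt with rfl | he
  · simp
  · simpa [he.ne] using tendsto_rpow_neg_atTop (neg_pos.2 he)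

lemma eq_zero_of_tendsto_sum_mul_rpow {ι : Type*} {s : Finset ι} {e : ι → ℝ}
    (he : Set.InjOn e s) {C : ι → ℝ} {M : ℝ}
    (h : Tendsto (fun t : ℝ => ∑ j ∈ s, C j * t ^ e j) atTop (𝓝 M))
    {i : ι} (hi : i ∈ s) (hpos : 0 < e i) : C i = 0 := by
  classical
  induction s using Finset.strongInduction generalizing M with
  | _ s ih =>
  obtain ⟨m, hm, hmax⟩ := s.exists_max_image e ⟨i, hi⟩
  -- dividing by the dominant power `t ^ e m` isolates `C m`
  have hCm : C m = 0 := by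
    have hzero : Tendsto (fun t : ℝ => (∑ j ∈ s, C j * t ^ e j) / t ^ e m) atTop (𝓝 0) :=
      h.div_atTop (tendsto_rpow_atTop (hpos.trans_le (hmax i hi)))
    have hlead : Tendsto (fun t : ℝ => ∑ j ∈ s, C j * t ^ (e j - e m)) atTop (𝓝 (C m)) := by
      convert tendsto_finsetSum s fun j hj =>
        (tendsto_rpow_atTop_of_nonpos (sub_nonpos.2 (hmax j hj))).const_mul (C j) using 2
      rw [Finset.sum_eq_single_of_mem m hm fun j hj hjm => by
        simp [sub_eq_zero, he.ne hj hm hjm]]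
      simp
    refine tendsto_nhds_unique (hlead.congr' ?_) hzero
    filter_upwards [eventually_gt_atTop 0] with t ht
    simp only [Finset.sum_div, mul_div_assoc, Real.rpow_sub ht]
  by_cases him : i = m
  · exact him ▸ hCm
  · refine ih (M := M) (s.erase m) (Finset.erase_ssubset hm)
      (he.mono (Finset.erase_subset m s)) ?_ (Finset.mem_erase.2 ⟨him, hi⟩)
    exact h.congr fun t => (Finset.sum_erase s (by simp [hCm])).symm

namespace MvPolynomial

variable {σ : Type*}

lemma IsWeightedHomogeneous.eval_rpow_mul {w : σ → ℝ} {q : MvPolynomial σ ℝ} {v : ℝ}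
    (hq : IsWeightedHomogeneous w q v) {t : ℝ} (ht : 0 < t) (z : σ → ℝ) :
    eval (fun j => t ^ w j * z j) q = t ^ v * eval z q := by
  rw [eval_eq, eval_eq, Finset.mul_sum]
  refine Finset.sum_congr rfl fun α hα => ?_
  rw [← hq (mem_support_iff.1 hα), Finsupp.weight_apply, Finsupp.sum, Real.rpow_sum_of_pos ht]
  simp only [mul_pow, Finset.prod_mul_distrib, nsmul_eq_mul, mul_comm _ (w _),
    Real.rpow_mul_natCast ht.le]
  ring

lemma eval_rpow_mul_eq_sum (w : σ → ℝ) (p : MvPolynomial σ ℝ) {t : ℝ} (ht : 0 < t)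
    (z : σ → ℝ) :
    eval (fun j => t ^ w j * z j) p =
      ∑ v ∈ p.support.image (Finsupp.weight w),
        t ^ v * eval z (weightedHomogeneousComponent w v p) := by
  classical
  have hsupp : Function.support (fun v => weightedHomogeneousComponent w v p) ⊆
      ↑(p.support.image (Finsupp.weight w)) := fun v hv => by
    by_contra hv'
    exact hv (weightedHomogeneousComponent_eq_zero' v p fun α hα hαv =>
      hv' (Finset.mem_image.2 ⟨α, hα, hαv⟩))
  conv_lhs => rw [← sum_weightedHomogeneousComponent w p,
    finsum_eq_sum_of_support_subset _ hsupp, map_sum]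
  exact Finset.sum_congr rfl fun v _ =>
    (weightedHomogeneousComponent_isWeightedHomogeneous v p).eval_rpow_mul ht z

theorem tendsto_rescaled_eval_prod (p : MvPolynomial σ ℝ) (w : σ → ℝ) (b : ℝ)
    {Φ : (σ → ℝ) → ℝ}
    (hΦ : ∀ z, Tendsto (fun t : ℝ => t⁻¹ ^ b * eval (fun j => t ^ w j * z j) p)
      atTop (𝓝 (Φ z)))
    (z : σ → ℝ) :
    Tendsto (fun q : ℝ × (σ → ℝ) => q.1⁻¹ ^ b * eval (fun j => q.1 ^ w j * q.2 j) p)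
      (atTop ×ˢ 𝓝 z) (𝓝 (Φ z)) := by
  classical
  set E := p.support.image (Finsupp.weight w)
  set P := fun v => weightedHomogeneousComponent w v p
  have expand : ∀ t : ℝ, 0 < t → ∀ z' : σ → ℝ,
      t⁻¹ ^ b * eval (fun j => t ^ w j * z' j) p = ∑ v ∈ E, eval z' (P v) * t ^ (v - b) := by
    intro t ht z'
    rw [eval_rpow_mul_eq_sum w p ht, Finset.mul_sum]
    refine Finset.sum_congr rfl fun v _ => ?_
    rw [Real.inv_rpow ht.le, Real.rpow_sub ht]
    ring
  have hhigh : ∀ v ∈ E, b < v → ∀ z', eval z' (P v) = 0 := fun v hv hbv z' =>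
    eq_zero_of_tendsto_sum_mul_rpow (e := (· - b)) sub_left_injective.injOn
      ((hΦ z').congr' (eventually_gt_atTop 0 |>.mono fun t ht => expand t ht z')) hv
      (sub_pos.2 hbv)
  have hjoint : Tendsto (fun q : ℝ × (σ → ℝ) => ∑ v ∈ E, eval q.2 (P v) * q.1 ^ (v - b))
      (atTop ×ˢ 𝓝 z) (𝓝 (∑ v ∈ E, eval z (P v) * if v - b = 0 then 1 else 0)) := by
    refine tendsto_finsetSum E fun v hv => ?_
    rcases le_or_gt v b with hvb | hbv
    · exact (((continuous_eval _).tendsto z).comp tendsto_snd).mul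
        ((tendsto_rpow_atTop_of_nonpos (sub_nonpos.2 hvb)).comp tendsto_fst)
    · simp [hhigh v hv hbv]
  have hΦz : Φ z = ∑ v ∈ E, eval z (P v) * if v - b = 0 then 1 else 0 :=
    tendsto_nhds_unique (hΦ z) <| (hjoint.comp (tendsto_id.prodMk tendsto_const_nhds)).congr' <|
      eventually_gt_atTop 0 |>.mono fun t ht => (expand t ht z).symm
  rw [hΦz]
  exact hjoint.congr' <| tendsto_fst.eventually (eventually_gt_atTop 0) |>.mono
    fun q hq => (expand q.1 hq q.2).symm

end MvPolynomial

theorem tendsto_dil_of_polynomial {d : ℕ} {σ : Type*} (a : Fin d → ℝ) (w : σ → ℝ)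
    {F : (σ → ℝ) → Fin d → ℝ}
    (hF : ∀ i, ∃ p : MvPolynomial σ ℝ, ∀ z, F z i = MvPolynomial.eval z p)
    {Φ : (σ → ℝ) → Fin d → ℝ}
    (hΦ : ∀ z, Tendsto (fun t : ℝ => dil a t⁻¹ (F fun j => t ^ w j * z j)) atTop (𝓝 (Φ z)))
    {u : ℕ → σ → ℝ} {z : σ → ℝ}
    (hu : Tendsto (fun k : ℕ => fun j => (k : ℝ)⁻¹ ^ w j * u k j) atTop (𝓝 z)) :
    Tendsto (fun k : ℕ => dil a (k : ℝ)⁻¹ (F (u k))) atTop (𝓝 (Φ z)) := by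
  refine tendsto_pi_nhds.2 fun i => ?_
  obtain ⟨p, hp⟩ := hF i
  have hlim := MvPolynomial.tendsto_rescaled_eval_prod p w (a i) (Φ := fun z => Φ z i)
    (fun z => by simpa only [dil, hp] using tendsto_pi_nhds.1 (hΦ z) i) z
  refine (hlim.comp (tendsto_natCast_atTop_atTop.prodMk hu)).congr' ?_
  filter_upwards [eventually_gt_atTop 0] with k hk
  have hk' : (0 : ℝ) < k := Nat.cast_pos.2 hk
  simp only [Function.comp_apply, dil, hp, Real.inv_rpow hk'.le,
    mul_inv_cancel_left₀ (Real.rpow_pos_of_pos hk' _).ne']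

theorem stmt_4 (d : ℕ) (G : PolyGroup d) (D : ApproxDil d G)
    (H : Set (Fin d → ℝ)) (hH0 : (0 : Fin d → ℝ) ∈ H)
    (hHmul : ∀ x ∈ H, ∀ y ∈ H, G.mul x y ∈ H) (hHinv : ∀ x ∈ H, G.inv x ∈ H) :
    (0 : Fin d → ℝ) ∈ limitSubgroup D.a H ∧
    (∀ x ∈ limitSubgroup D.a H, ∀ y ∈ limitSubgroup D.a H,
      D.bullet x y ∈ limitSubgroup D.a H) ∧
    (∀ x ∈ limitSubgroup D.a H, D.bulletInv x ∈ limitSubgroup D.a H) := by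
  refine ⟨⟨fun _ => 0, fun _ => hH0,
    tendsto_const_nhds.congr fun _ => funext fun _ => (mul_zero _).symm⟩, ?_, ?_⟩
  · rintro x ⟨u, huH, hu⟩ y ⟨v, hvH, hv⟩
    refine ⟨fun k => G.mul (u k) (v k), fun k => hHmul _ (huH k) _ (hvH k), ?_⟩
    have hpoly : ∀ i, ∃ p : MvPolynomial (Fin d ⊕ Fin d) ℝ,
        ∀ z, G.mul (z ∘ Sum.inl) (z ∘ Sum.inr) i = MvPolynomial.eval z p :=
      fun i => (G.poly_mul i).imp fun p hp z => by rw [hp, Sum.elim_comp_inl_inr]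
    have huv : Tendsto (fun k : ℕ => fun j => (k : ℝ)⁻¹ ^ Sum.elim D.a D.a j *
        Sum.elim (u k) (v k) j) atTop (𝓝 (Sum.elim x y)) :=
      tendsto_pi_nhds.2 (Sum.rec (tendsto_pi_nhds.1 hu) (tendsto_pi_nhds.1 hv))
    exact tendsto_dil_of_polynomial D.a (Sum.elim D.a D.a) hpoly
      (fun z => D.tendsto_mul (z ∘ Sum.inl) (z ∘ Sum.inr)) huv
  · rintro x ⟨u, huH, hu⟩
    exact ⟨fun k => G.inv (u k), fun k => hHinv _ (huH k),
      tendsto_dil_of_polynomial D.a D.a G.poly_inv D.tendsto_inv hu⟩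
end
end

section
/- Let b₁,…,b_d > 0 and let (ℝ^d, ·) be a group with identity 0 whose multiplication has i-th coordinate (x·y)_i = x_i + y_i + p̄_i(x,y), where each p̄_i is a finite real linear combination of monomials ∏_k x_k^{m_k} ∏_k y_k^{n_k} of total degree Σ_k (m_k + n_k) ≥ 2 and of weighted degree Σ_k (m_k + n_k)·b_k ≤ b_i. Then, with N_w(z) := max_{1≤i≤d} |z_i|^{1/b_i}, there exists a constant C such that N_w(x·y) ≤ C·(N_w(x) + N_w(y) + 1) for all x, y ∈ ℝ^d. -/
open Filter Topology

noncomputable section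

/-- The homogeneous quasi-norm associated with the weights `b`. -/
def Nw {d : ℕ} (b : Fin d → ℝ) (z : Fin d → ℝ) : ℝ := ⨆ i, |z i| ^ (1 / b i)

/-! Set `M = N_w(x) + N_w(y) + 1 ≥ 1`. Every coordinate satisfies `|x_k|, |y_k| ≤ M ^ b_k`, so a
monomial of weighted degree at most `b_i` is bounded by `M ^ b_i`; hence `|(x·y)_i| ≤ K_i M ^ b_i`
with `K_i` depending only on the coefficients of `p̄_i`. Taking `b_i`-th roots gives
`|(x·y)_i| ^ (1 / b_i) ≤ K_i ^ (1 / b_i) M`. -/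

lemma Nw_nonneg {d : ℕ} (b z : Fin d → ℝ) : 0 ≤ Nw b z :=
  Real.iSup_nonneg fun _ => Real.rpow_nonneg (abs_nonneg _) _

lemma abs_le_rpow_of_Nw_le {d : ℕ} {b z : Fin d → ℝ} {M : ℝ} (hz : Nw b z ≤ M) {i : Fin d}
    (hbi : 0 < b i) : |z i| ≤ M ^ b i := by
  have hle : |z i| ^ (b i)⁻¹ ≤ M := by
    rw [← one_div]
    exact (le_ciSup (f := fun j => |z j| ^ (1 / b j)) (Finite.bddAbove_range _) i).trans hz
  exact (Real.rpow_inv_le_iff_of_pos (abs_nonneg _) ((Nw_nonneg b z).trans hz) hbi).1 hle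

lemma Nw_le_of_forall_rpow_le {d : ℕ} {b z : Fin d → ℝ} {c : ℝ} (hc : 0 ≤ c)
    (h : ∀ i, |z i| ^ (1 / b i) ≤ c) : Nw b z ≤ c :=
  Real.iSup_le h hc

def weightedDegree {σ : Type*} (w : σ → ℝ) (m : σ →₀ ℕ) : ℝ :=
  m.sum fun k e => (e : ℝ) * w k

lemma abs_monomial_le_rpow_weightedDegree {σ : Type*} [Fintype σ] {w v : σ → ℝ} {M : ℝ}
    (hM : 1 ≤ M) (hv : ∀ k, |v k| ≤ M ^ w k) (m : σ →₀ ℕ) :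
    |∏ k, v k ^ m k| ≤ M ^ weightedDegree w m := by
  have hM0 : 0 < M := one_pos.trans_le hM
  calc |∏ k, v k ^ m k| = ∏ k, |v k| ^ m k := by simp only [Finset.abs_prod, abs_pow]
    _ ≤ ∏ k, (M ^ w k) ^ m k :=
        Finset.prod_le_prod (fun k _ => by positivity) fun k _ => pow_le_pow_left₀ (abs_nonneg _) (hv k) _
    _ = M ^ weightedDegree w m := by
        rw [weightedDegree, Finsupp.sum_fintype _ _ fun _ => by simp, Real.rpow_sum_of_pos hM0]
        refine Finset.prod_congr rfl fun k _ => ?_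
        rw [← Real.rpow_natCast, ← Real.rpow_mul hM0.le, mul_comm]

lemma abs_eval_le_of_weightedDegree_le {σ : Type*} [Fintype σ] {w v : σ → ℝ} {M B : ℝ}
    (hM : 1 ≤ M) (hv : ∀ k, |v k| ≤ M ^ w k) (p : MvPolynomial σ ℝ)
    (hp : ∀ m ∈ p.support, weightedDegree w m ≤ B) :
    |MvPolynomial.eval v p| ≤ (∑ m ∈ p.support, |p.coeff m|) * M ^ B := by
  rw [MvPolynomial.eval_eq', Finset.sum_mul]
  refine (Finset.abs_sum_le_sum_abs _ _).trans (Finset.sum_le_sum fun m hm => ?_)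
  rw [abs_mul]
  gcongr
  exact (abs_monomial_le_rpow_weightedDegree hM hv m).trans
    (Real.rpow_le_rpow_of_exponent_le hM (hp m hm))

lemma rpow_one_div_le_of_le_mul_rpow {t K M β : ℝ} (ht : 0 ≤ t) (hK : 0 ≤ K) (hM : 0 ≤ M)
    (hβ : 0 < β) (h : t ≤ K * M ^ β) : t ^ (1 / β) ≤ K ^ (1 / β) * M := by
  calc t ^ (1 / β) ≤ (K * M ^ β) ^ (1 / β) := by gcongr
    _ = K ^ (1 / β) * M := by
        rw [Real.mul_rpow hK (by positivity), ← Real.rpow_mul hM, mul_one_div_cancel hβ.ne',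
          Real.rpow_one]

theorem stmt_9_general (d : ℕ) (b : Fin d → ℝ) (hb : ∀ i, 0 < b i)
    (mul : (Fin d → ℝ) → (Fin d → ℝ) → (Fin d → ℝ))
    (P : Fin d → MvPolynomial (Fin d ⊕ Fin d) ℝ)
    (hmul : ∀ x y i, mul x y i = x i + y i + MvPolynomial.eval (Sum.elim x y) (P i))
    (hP : ∀ i, ∀ m ∈ (P i).support,
      (2 ≤ m.sum fun _ e => e) ∧
        (m.sum fun k e => (e : ℝ) * b (Sum.elim id id k)) ≤ b i) :
    ∃ C : ℝ, ∀ x y, Nw b (mul x y) ≤ C * (Nw b x + Nw b y + 1) := by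
  set K : Fin d → ℝ := fun i => 2 + ∑ m ∈ (P i).support, |(P i).coeff m|
  have hK : ∀ i, 0 ≤ K i := fun i => by positivity
  refine ⟨∑ i, K i ^ (1 / b i), fun x y => ?_⟩
  set M := Nw b x + Nw b y + 1
  have hM : 1 ≤ M := by linarith [Nw_nonneg b x, Nw_nonneg b y]
  have hx : Nw b x ≤ M := by linarith [Nw_nonneg b y]
  have hy : Nw b y ≤ M := by linarith [Nw_nonneg b x]
  have hxy : ∀ k, |Sum.elim x y k| ≤ M ^ b (Sum.elim id id k) := by
    rintro (k | k)
    exacts [abs_le_rpow_of_Nw_le hx (hb k), abs_le_rpow_of_Nw_le hy (hb k)]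
  have hcoord : ∀ i, |mul x y i| ≤ K i * M ^ b i := fun i => by
    have hpoly := abs_eval_le_of_weightedDegree_le hM hxy (P i) fun m hm => (hP i m hm).2
    rw [hmul]
    linarith [abs_add_three (x i) (y i) (MvPolynomial.eval (Sum.elim x y) (P i)),
      abs_le_rpow_of_Nw_le hx (hb i), abs_le_rpow_of_Nw_le hy (hb i)]
  refine Nw_le_of_forall_rpow_le (by positivity) fun i => ?_
  refine (rpow_one_div_le_of_le_mul_rpow (abs_nonneg _) (hK i) (by positivity) (hb i)
    (hcoord i)).trans ?_
  gcongr
  exact Finset.single_le_sum (f := fun j => K j ^ (1 / b j)) (fun j _ => by positivity)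
    (Finset.mem_univ i)

theorem stmt_9 (d : ℕ) (b : Fin d → ℝ) (hb : ∀ i, 0 < b i)
    (mul : (Fin d → ℝ) → (Fin d → ℝ) → (Fin d → ℝ))
    (P : Fin d → MvPolynomial (Fin d ⊕ Fin d) ℝ)
    (hmul : ∀ x y i, mul x y i = x i + y i + MvPolynomial.eval (Sum.elim x y) (P i))
    (hP : ∀ i, ∀ m ∈ (P i).support,
      (2 ≤ m.sum fun _ e => e) ∧
        (m.sum fun k e => (e : ℝ) * b (Sum.elim id id k)) ≤ b i)
    (hassoc : ∀ x y z, mul (mul x y) z = mul x (mul y z))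
    (hmulzero : ∀ x, mul x 0 = x) (hzeromul : ∀ x, mul 0 x = x)
    (hinv : ∀ x, ∃ y, mul x y = 0 ∧ mul y x = 0) :
    ∃ C : ℝ, ∀ x y, Nw b (mul x y) ≤ C * (Nw b x + Nw b y + 1) :=
  stmt_9_general d b hb mul P hmul hP
end
end

section
/- Let G = (ℝ^d, ·) be a group whose underlying set is ℝ^d, with identity 0, whose multiplication and inversion are given coordinatewise by real polynomial functions. Then for every compact set K ⊆ ℝ^d there exists a constant C_K such that for all x, y ∈ K: ‖x⁻¹·y‖₂ ≤ C_K‖x − y‖₂ and ‖x − y‖₂ ≤ C_K‖x⁻¹·y‖₂. -/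
open Filter Topology MeasureTheory

noncomputable section

/-! The maps `(x, y) ↦ x⁻¹ y` and `(x, z) ↦ x z` are polynomial, hence `C¹`, hence Lipschitz on
compact sets, uniformly in `x`. Since `x⁻¹ x = 0`, the first gives `‖x⁻¹ y‖ ≤ C ‖y - x‖`. Since
`x (x⁻¹ y) = y` and `x 0 = x`, the second, applied with `z` ranging over the compact set
`K⁻¹ K ∪ {0}`, gives `‖y - x‖ ≤ C ‖x⁻¹ y - 0‖`. -/

theorem eucNorm_nonneg {d : ℕ} (v : Fin d → ℝ) : 0 ≤ eucNorm v :=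
  Real.sqrt_nonneg _

theorem eucNorm_eq_norm_toLp {d : ℕ} (v : Fin d → ℝ) :
    eucNorm v = ‖(WithLp.toLp 2 v : EuclideanSpace ℝ (Fin d))‖ := by
  simp [eucNorm, EuclideanSpace.norm_eq]

theorem eucNorm_sub_comm {d : ℕ} (u v : Fin d → ℝ) : eucNorm (u - v) = eucNorm (v - u) := by
  rw [← neg_sub, eucNorm_eq_norm_toLp, eucNorm_eq_norm_toLp, WithLp.toLp_neg, norm_neg]

theorem LipschitzOnWith.dist_le_mul_of_mem_prod {α β γ : Type*} [PseudoMetricSpace α]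
    [PseudoMetricSpace β] [PseudoMetricSpace γ] {f : α × β → γ} {K : NNReal} {S : Set α}
    {T : Set β} (hf : LipschitzOnWith K f (S ×ˢ T)) {x : α} {y y' : β} (hx : x ∈ S)
    (hy : y ∈ T) (hy' : y' ∈ T) : dist (f (x, y)) (f (x, y')) ≤ K * dist y y' := by
  simpa [Prod.dist_eq] using hf.dist_le_mul (x, y) ⟨hx, hy⟩ (x, y') ⟨hx, hy'⟩

theorem exists_eucNorm_sub_le_of_contDiff {d : ℕ}
    {f : (Fin d → ℝ) × (Fin d → ℝ) → Fin d → ℝ} (hf : ContDiff ℝ 1 f)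
    {S T : Set (Fin d → ℝ)} (hS : IsCompact S) (hT : IsCompact T) :
    ∃ C : ℝ, ∀ x ∈ S, ∀ y ∈ T, ∀ y' ∈ T,
      eucNorm (f (x, y) - f (x, y')) ≤ C * eucNorm (y - y') := by
  let e : (Fin d → ℝ) → EuclideanSpace ℝ (Fin d) := WithLp.toLp 2
  have he : Continuous e := PiLp.continuous_toLp 2 _
  have hf' : ContDiff ℝ 1 fun p : EuclideanSpace ℝ (Fin d) × EuclideanSpace ℝ (Fin d) =>
      e (f (p.1.ofLp, p.2.ofLp)) :=
    PiLp.contDiff_toLp.comp <| hf.comp <|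
      (PiLp.contDiff_ofLp.comp contDiff_fst).prodMk (PiLp.contDiff_ofLp.comp contDiff_snd)
  obtain ⟨C, hC⟩ := hf'.locallyLipschitz.locallyLipschitzOn.exists_lipschitzOnWith_of_compact
    ((hS.image he).prod (hT.image he))
  refine ⟨C, fun x hx y hy y' hy' => ?_⟩
  simpa [eucNorm_eq_norm_toLp, dist_eq_norm, e] using hC.dist_le_mul_of_mem_prod
    (Set.mem_image_of_mem e hx) (Set.mem_image_of_mem e hy) (Set.mem_image_of_mem e hy')

namespace PolyGroup

variable {d : ℕ} (G : PolyGroup d)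

theorem contDiff_mul {n : WithTop ℕ∞} :
    ContDiff ℝ n fun p : (Fin d → ℝ) × (Fin d → ℝ) => G.mul p.1 p.2 := by
  refine AnalyticOnNhd.contDiff fun p _ => analyticAt_pi_iff.2 fun i => ?_
  obtain ⟨q, hq⟩ := G.poly_mul i
  simp only [hq, ← MvPolynomial.coe_aeval_eq_eval]
  refine AnalyticAt.aeval_mvPolynomial (fun j => ?_) q
  rcases j with j | j
  · exact analyticAt_pi_iff.1 analyticAt_fst j
  · exact analyticAt_pi_iff.1 analyticAt_snd j

theorem contDiff_inv {n : WithTop ℕ∞} : ContDiff ℝ n G.inv := by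
  refine AnalyticOnNhd.contDiff fun x _ => analyticAt_pi_iff.2 fun i => ?_
  obtain ⟨q, hq⟩ := G.poly_inv i
  simp only [hq]
  exact AnalyticOnNhd.eval_mvPolynomial q x trivial

theorem mul_inv_mul_cancel (x y : Fin d → ℝ) : G.mul x (G.mul (G.inv x) y) = y := by
  rw [← G.mul_assoc', G.mul_inv', G.zero_mul']

end PolyGroup

theorem stmt_10 (d : ℕ) (G : PolyGroup d) (K : Set (Fin d → ℝ)) (hK : IsCompact K) :
    ∃ C : ℝ, ∀ x ∈ K, ∀ y ∈ K,
      eucNorm (G.mul (G.inv x) y) ≤ C * eucNorm (x - y) ∧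
      eucNorm (x - y) ≤ C * eucNorm (G.mul (G.inv x) y) := by
  let F : (Fin d → ℝ) × (Fin d → ℝ) → Fin d → ℝ := fun p => G.mul (G.inv p.1) p.2
  have hF : ContDiff ℝ 1 F :=
    G.contDiff_mul.comp ((G.contDiff_inv.comp contDiff_fst).prodMk contDiff_snd)
  obtain ⟨C₁, hC₁⟩ := exists_eucNorm_sub_le_of_contDiff hF hK hK
  obtain ⟨C₂, hC₂⟩ := exists_eucNorm_sub_le_of_contDiff G.contDiff_mul hK
    (((hK.prod hK).image hF.continuous).union (isCompact_singleton (x := 0)))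
  refine ⟨max C₁ C₂, fun x hx y hy => ⟨?_, ?_⟩⟩
  · calc eucNorm (G.mul (G.inv x) y) = eucNorm (F (x, y) - F (x, x)) := by
          simp [F, G.inv_mul']
      _ ≤ C₁ * eucNorm (y - x) := hC₁ x hx y hy x hx
      _ ≤ max C₁ C₂ * eucNorm (x - y) := by
          rw [eucNorm_sub_comm]
          exact mul_le_mul_of_nonneg_right (le_max_left _ _) (eucNorm_nonneg _)
  · calc eucNorm (x - y) = eucNorm (G.mul x (F (x, y)) - G.mul x 0) := by
          rw [G.mul_inv_mul_cancel, G.mul_zero', eucNorm_sub_comm]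
      _ ≤ C₂ * eucNorm (F (x, y) - 0) :=
          hC₂ x hx _ (Or.inl ⟨(x, y), ⟨hx, hy⟩, rfl⟩) 0 (Or.inr rfl)
      _ ≤ max C₁ C₂ * eucNorm (G.mul (G.inv x) y) := by
          rw [sub_zero]
          exact mul_le_mul_of_nonneg_right (le_max_right _ _) (eucNorm_nonneg _)
end
end
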